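/- arXiv:2108.00565 — 2 statements merged into one kernel-verified Lean document; each statement's English description precedes it below -/
import Mathlib

section
/- Let K be an AEC, λ ≥ LS(K) a cardinal such that K has the λ-amalgamation property, and κ a cardinal with κ ≥ λ. Then (gS¹_λ)^κ = gS^κ_λ. -/
universe u

open Cardinal Set FirstOrder

namespace AECStmt

variable (L : FirstOrder.Language.{u, u})

/-- A bundled `L`-structure in universe `u`. -/
structure Mdl : Type (u + 1) where
  Carrier : Type u
  struc : L.Structure Carrier

attribute [instance] Mdl.struc

/-- An abstract elementary class in the language `L`, presented by its class of models
together with its class of strong (`K`-)embeddings.  `M ≤_K N` corresponds to the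
inclusion embedding being strong. -/
structure AEC : Type (u + 1) where
  Mem : Mdl L → Prop
  IsStrong : ∀ {M N : Mdl L}, (M.Carrier ↪[L] N.Carrier) → Prop
  LS : Cardinal.{u}
  /-- the Löwenheim–Skolem number is at least `|L(K)| + ℵ₀` -/
  LS_ge : L.card + ℵ₀ ≤ LS
  strong_mem_left : ∀ {M N : Mdl L} (f : M.Carrier ↪[L] N.Carrier), IsStrong f → Mem M
  strong_mem_right : ∀ {M N : Mdl L} (f : M.Carrier ↪[L] N.Carrier), IsStrong f → Mem N
  strong_refl : ∀ {M : Mdl L}, Mem M →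
    IsStrong (FirstOrder.Language.Embedding.refl L M.Carrier)
  strong_comp : ∀ {M N P : Mdl L} (f : M.Carrier ↪[L] N.Carrier)
    (g : N.Carrier ↪[L] P.Carrier), IsStrong f → IsStrong g → IsStrong (g.comp f)
  /-- closure under isomorphisms -/
  iso_strong : ∀ {M N : Mdl L} (e : M.Carrier ≃[L] N.Carrier), Mem M → Mem N →
    IsStrong e.toEmbedding
  /-- coherence -/
  coherence : ∀ {M N P : Mdl L} (f : M.Carrier ↪[L] N.Carrier)
    (g : N.Carrier ↪[L] P.Carrier), IsStrong (g.comp f) → IsStrong g → IsStrong f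
  /-- the Tarski–Vaught chain axioms: every chain has a union, which is a strong
  extension of every member of the chain and embeds strongly into any common
  strong extension (smoothness). -/
  chain : ∀ (I : Type u) (_ : Nonempty I) (_inst : LinearOrder I) (M : I → Mdl L)
    (f : ∀ i j : I, i ≤ j → ((M i).Carrier ↪[L] (M j).Carrier)),
    (∀ i j (h : i ≤ j), IsStrong (f i j h)) →
    (∀ i j k (hij : i ≤ j) (hjk : j ≤ k), (f j k hjk).comp (f i j hij) = f i k (hij.trans hjk)) →
    ∃ (N : Mdl L) (g : ∀ i, (M i).Carrier ↪[L] N.Carrier),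
      (∀ i, IsStrong (g i)) ∧
      (∀ i j (h : i ≤ j), (g j).comp (f i j h) = g i) ∧
      (∀ x : N.Carrier, ∃ i y, g i y = x) ∧
      (∀ (P : Mdl L) (h : N.Carrier ↪[L] P.Carrier),
        (∀ i, IsStrong (h.comp (g i))) → IsStrong h)
  /-- the Löwenheim–Skolem axiom -/
  lowenheimSkolem : ∀ (M : Mdl L), Mem M → ∀ A : Set M.Carrier,
    ∃ (N : Mdl L) (f : N.Carrier ↪[L] M.Carrier), IsStrong f ∧ A ⊆ Set.range f ∧
      #N.Carrier ≤ max #A LS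

variable {L}

/-- A "pointed" realization of a Galois type: a tuple `tup` (indexed by `ι`) inside a model
`M ∈ K`, over the parameter set `A` placed in `M` via `par`. -/
structure TypePt (K : AEC L) (ι A : Type u) : Type (u + 1) where
  M : Mdl L
  mem : K.Mem M
  par : A → M.Carrier
  tup : ι → M.Carrier

/-- The atomic relation generating equality of Galois types: two pointed tuples are related
if they can be mapped into a common model by strong embeddings agreeing on the parameters. -/
def TypePt.EqAtom {K : AEC L} {ι A : Type u} (p q : TypePt K ι A) : Prop :=
  ∃ (N : Mdl L) (f : p.M.Carrier ↪[L] N.Carrier) (g : q.M.Carrier ↪[L] N.Carrier),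
    K.IsStrong f ∧ K.IsStrong g ∧ (∀ a, f (p.par a) = g (q.par a)) ∧
      ∀ i, f (p.tup i) = g (q.tup i)

/-- Equality of Galois types is the transitive (here: equivalence) closure of `EqAtom`. -/
instance gtpSetoid (K : AEC L) (ι A : Type u) : Setoid (TypePt K ι A) :=
  Relation.EqvGen.setoid TypePt.EqAtom

/-- The set of Galois types of `ι`-tuples over the parameter set `A`. -/
def GType (K : AEC L) (ι A : Type u) : Type (u + 1) := Quotient (gtpSetoid K ι A)

/-- The Galois type of a pointed tuple. -/
def gtp {K : AEC L} {ι A : Type u} (p : TypePt K ι A) : GType K ι A :=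
  Quotient.mk (gtpSetoid K ι A) p

/-- `gS^ι(A;M₀,h₀)`: the Galois types of `ι`-tuples over the set `A` (placed in the model `M₀`
by `h₀`), realized in some strong extension of `M₀`. -/
def typesOver (K : AEC L) (ι A : Type u) (M₀ : Mdl L) (h₀ : A → M₀.Carrier) :
    Set (GType K ι A) :=
  {t | ∃ p : TypePt K ι A,
    (∃ f : M₀.Carrier ↪[L] p.M.Carrier, K.IsStrong f ∧ ∀ a, f (h₀ a) = p.par a) ∧ gtp p = t}

/-- `|gS^ι(A)|` for the placed set `(A, h₀)`. -/
noncomputable def gSCard (K : AEC L) (ι A : Type u) (M₀ : Mdl L) (h₀ : A → M₀.Carrier) :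
    Cardinal.{u + 1} :=
  #(typesOver K ι A M₀ h₀)

/-- `|gS^ι(M)|` : Galois types over (the universe of) the model `M`. -/
noncomputable def gSModelCard (K : AEC L) (ι : Type u) (M : Mdl L) : Cardinal.{u + 1} :=
  gSCard K ι M.Carrier M id

/-- `gS^κ_λ := sup { |gS^κ(M)| : M ∈ K, ‖M‖ = λ }`. -/
noncomputable def gSSup (K : AEC L) (ι : Type u) (lam : Cardinal.{u}) : Cardinal.{u + 1} :=
  ⨆ M : {M : Mdl L // K.Mem M ∧ #M.Carrier = lam}, gSModelCard K ι M.1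

/-- `K` is `ι`-stable in `λ`: over every set of size `≤ λ` (in some model of `K`) there are
at most `λ` Galois types of `ι`-tuples. -/
def StableIn (K : AEC L) (ι : Type u) (lam : Cardinal.{u}) : Prop :=
  ∀ (A : Type u), #A ≤ lam → ∀ (M₀ : Mdl L), K.Mem M₀ → ∀ h₀ : A → M₀.Carrier,
    gSCard K ι A M₀ h₀ ≤ Cardinal.lift.{u + 1} lam

/-- restriction of a pointed tuple to a subset of the parameters -/
def TypePt.restrict {K : AEC L} {ι A : Type u} (A₀ : Set A) (p : TypePt K ι A) :
    TypePt K ι A₀ :=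
  ⟨p.M, p.mem, fun a => p.par a.1, p.tup⟩

/-- restriction of a Galois type to a subset of its domain -/
def GType.restrict {K : AEC L} {ι A : Type u} (A₀ : Set A) :
    GType K ι A → GType K ι A₀ :=
  Quotient.map (TypePt.restrict A₀) (by
    intro p q h
    induction h with
    | rel x y hxy =>
        obtain ⟨N, f, g, hf, hg, hpar, htup⟩ := hxy
        exact Relation.EqvGen.rel _ _ ⟨N, f, g, hf, hg, fun a => hpar a.1, htup⟩
    | refl x => exact Relation.EqvGen.refl _
    | symm x y _ ih => exact Relation.EqvGen.symm _ _ ih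
    | trans x y z _ _ ih₁ ih₂ => exact Relation.EqvGen.trans _ _ _ ih₁ ih₂)

/-- `K` is `(<κ)`-tame (for types of single elements). -/
def Tame (K : AEC L) (κ : Cardinal.{u}) : Prop :=
  ∀ (A : Type u) (M₀ : Mdl L), K.Mem M₀ → ∀ (h₀ : A → M₀.Carrier)
    (p q : GType K PUnit.{u + 1} A),
    p ∈ typesOver K PUnit.{u + 1} A M₀ h₀ → q ∈ typesOver K PUnit.{u + 1} A M₀ h₀ → p ≠ q →
    ∃ A₀ : Set A, #A₀ < κ ∧ GType.restrict A₀ p ≠ GType.restrict A₀ q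

/-- the `λ`-amalgamation property -/
def APAt (K : AEC L) (lam : Cardinal.{u}) : Prop :=
  ∀ (M N₁ N₂ : Mdl L) (f₁ : M.Carrier ↪[L] N₁.Carrier) (f₂ : M.Carrier ↪[L] N₂.Carrier),
    #M.Carrier = lam → K.IsStrong f₁ → K.IsStrong f₂ →
    ∃ (P : Mdl L) (g₁ : N₁.Carrier ↪[L] P.Carrier) (g₂ : N₂.Carrier ↪[L] P.Carrier),
      K.IsStrong g₁ ∧ K.IsStrong g₂ ∧ g₁.comp f₁ = g₂.comp f₂

/-- the (full) amalgamation property -/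
def AP (K : AEC L) : Prop :=
  ∀ (M N₁ N₂ : Mdl L) (f₁ : M.Carrier ↪[L] N₁.Carrier) (f₂ : M.Carrier ↪[L] N₂.Carrier),
    K.IsStrong f₁ → K.IsStrong f₂ →
    ∃ (P : Mdl L) (g₁ : N₁.Carrier ↪[L] P.Carrier) (g₂ : N₂.Carrier ↪[L] P.Carrier),
      K.IsStrong g₁ ∧ K.IsStrong g₂ ∧ g₁.comp f₁ = g₂.comp f₂

/-- the `λ`-joint embedding property -/
def JEPAt (K : AEC L) (lam : Cardinal.{u}) : Prop :=
  ∀ (M N : Mdl L), K.Mem M → K.Mem N → #M.Carrier = lam → #N.Carrier = lam →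
    ∃ (P : Mdl L) (f : M.Carrier ↪[L] P.Carrier) (g : N.Carrier ↪[L] P.Carrier),
      K.IsStrong f ∧ K.IsStrong g

/-- the (full) joint embedding property -/
def JEP (K : AEC L) : Prop :=
  ∀ (M N : Mdl L), K.Mem M → K.Mem N →
    ∃ (P : Mdl L) (f : M.Carrier ↪[L] P.Carrier) (g : N.Carrier ↪[L] P.Carrier),
      K.IsStrong f ∧ K.IsStrong g

/-- no maximal model -/
def NMM (K : AEC L) : Prop :=
  ∀ M : Mdl L, K.Mem M → ∃ (N : Mdl L) (f : M.Carrier ↪[L] N.Carrier),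
    K.IsStrong f ∧ ¬ Function.Surjective f

/-- the Galois type of the concatenated pair `a⌢b` over the empty set -/
def gtpPair {K : AEC L} (M : Mdl L) (hM : K.Mem M) (ι : Type u) (a b : ι → M.Carrier) :
    GType K (ι ⊕ ι) PEmpty.{u + 1} :=
  gtp ⟨M, hM, PEmpty.elim, Sum.elim a b⟩

/-- `M` has the `β`-order property* with index (linear) order `I`. -/
def OPStarIn (K : AEC L) (M : Mdl L) (hM : K.Mem M) (β : Ordinal.{u}) (I : Type u)
    [LinearOrder I] : Prop :=
  ∃ a : I → β.ToType → M.Carrier,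
    ∀ i₀ i₁ j₀ j₁ : I, i₀ < i₁ → j₀ < j₁ →
      gtpPair M hM β.ToType (a i₀) (a i₁) ≠ gtpPair M hM β.ToType (a j₁) (a j₀)

/-- `M` has the `β`-order property of length `μ` (index set well-ordered of type `μ`). -/
def OPIn (K : AEC L) (M : Mdl L) (hM : K.Mem M) (β : Ordinal.{u}) (μ : Cardinal.{u}) : Prop :=
  OPStarIn K M hM β μ.ord.ToType

/-- `K` has the `β`-order property of length `μ`. -/
def HasOP (K : AEC L) (β : Ordinal.{u}) (μ : Cardinal.{u}) : Prop :=
  ∃ (M : Mdl L) (hM : K.Mem M), OPIn K M hM β μ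

/-- `K` has the `β`-order property* of length `μ`: the index set may be any linear order of
cardinality `μ`. -/
def HasOPStar (K : AEC L) (β : Ordinal.{u}) (μ : Cardinal.{u}) : Prop :=
  ∃ (I : Type u) (inst : LinearOrder I), #I = μ ∧
    ∃ (M : Mdl L) (hM : K.Mem M), @OPStarIn L K M hM β I inst

/-- `K` has the `(<α)`-order property of length `μ`. -/
def HasLtOP (K : AEC L) (α : Ordinal.{u}) (μ : Cardinal.{u}) : Prop :=
  ∃ β : Ordinal.{u}, 1 ≤ β ∧ β < α ∧ HasOP K β μ

/-- `K` has the `(<α)`-order property* of length `μ`. -/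
def HasLtOPStar (K : AEC L) (α : Ordinal.{u}) (μ : Cardinal.{u}) : Prop :=
  ∃ β : Ordinal.{u}, 1 ≤ β ∧ β < α ∧ HasOPStar K β μ

/-- `ℶ_o(λ)`: the beth function starting at `λ`. -/
noncomputable def bethS (lam : Cardinal.{u}) (o : Ordinal.{u}) : Cardinal.{u} :=
  Ordinal.limitRecOn o lam (fun _ x => (2 : Cardinal.{u}) ^ x)
    (fun o _ ih => ⨆ i : Set.Iio o, ih i.1 i.2)


/-! ### Galois Morleyization: quantifier-free `L̂_{κ,κ}`-formulas -/

/-- Quantifier-free formulas of `L̂_{κ,κ}` in the free-variable context `γ`, where `L̂` is the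
`(<κ)`-Galois Morleyization of `K`: atomic formulas are equalities of `L`-terms, relations of
`L` applied to terms, and the new predicates `R_p` (for `p ∈ gS^{<κ}(∅)`) applied to variables;
formulas are closed under negation and conjunctions of `< κ` many formulas. -/
inductive QF (K : AEC L) (κ : Cardinal.{u}) (γ : Type u) : Type (u + 1)
  | eq (t₁ t₂ : L.Term γ) : QF K κ γ
  | lrel {n : ℕ} (R : L.Relations n) (ts : Fin n → L.Term γ) : QF K κ γ
  | grel (β : Ordinal.{u}) (hβ : β < κ.ord) (p : GType K β.ToType PEmpty.{u + 1})
      (v : β.ToType → γ) : QF K κ γ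
  | not (φ : QF K κ γ) : QF K κ γ
  | conj (J : Type u) (hJ : #J < κ) (f : J → QF K κ γ) : QF K κ γ

/-- Satisfaction of a quantifier-free `L̂_{κ,κ}`-formula in (the Morleyization `M̂` of) a model
`M ∈ K`, under the variable assignment `v`. -/
def QF.Realize {K : AEC L} {κ : Cardinal.{u}} (M : Mdl L) (hM : K.Mem M) {γ : Type u} :
    QF K κ γ → (γ → M.Carrier) → Prop
  | .eq t₁ t₂, v => t₁.realize v = t₂.realize v
  | .lrel R ts, v => FirstOrder.Language.Structure.RelMap R (fun i => (ts i).realize v)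
  | .grel _ _ p vars, v => gtp ⟨M, hM, PEmpty.elim, fun b => v (vars b)⟩ = p
  | .not φ, v => ¬ QF.Realize M hM φ v
  | .conj _ _ f, v => ∀ j, QF.Realize M hM (f j) v

/-- Relabelling the free variables of a quantifier-free formula (in particular, substituting
parameters for some of the variables). -/
def QF.relabel {K : AEC L} {κ : Cardinal.{u}} {γ δ : Type u} (g : γ → δ) :
    QF K κ γ → QF K κ δ
  | .eq t₁ t₂ => .eq (t₁.relabel g) (t₂.relabel g)
  | .lrel R ts => .lrel R (fun i => (ts i).relabel g)
  | .grel β hβ p v => .grel β hβ p (g ∘ v)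
  | .not φ => .not (φ.relabel g)
  | .conj J hJ f => .conj J hJ (fun j => (f j).relabel g)

/-- The `(<κ)`-syntactic type `tp_κ(tup/A; M̂)` of a pointed tuple: the set of quantifier-free
`L̂_{κ,κ}`-formulas over `A` (with free variables `ι ⊕ A`) it satisfies. -/
def TypePt.stp {K : AEC L} {ι A : Type u} (κ : Cardinal.{u}) (p : TypePt K ι A) :
    Set (QF K κ (ι ⊕ A)) :=
  {φ | QF.Realize p.M p.mem φ (Sum.elim p.tup p.par)}

/-- `M̂` has the syntactic `β`-order property of length `χ`. -/
def SynOPIn (K : AEC L) (κ : Cardinal.{u}) (M : Mdl L) (hM : K.Mem M) (β : Ordinal.{u})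
    (χ : Cardinal.{u}) : Prop :=
  ∃ (a : χ.ord.ToType → β.ToType → M.Carrier) (φ : QF K κ (β.ToType ⊕ β.ToType)),
    ∀ i j, i < j ↔ QF.Realize M hM φ (Sum.elim (a i) (a j))

/-- `K̂` has the `(<κ)`-syntactic order property of length `χ`. -/
def HasLtSynOP (K : AEC L) (κ : Cardinal.{u}) (χ : Cardinal.{u}) : Prop :=
  ∃ (β : Ordinal.{u}), β < κ.ord ∧ ∃ (M : Mdl L) (hM : K.Mem M), SynOPIn K κ M hM β χ

/-- `K̂` is `(<κ)`-syntactically stable in `μ`: over every set of size `≤ μ` there are at most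
`μ` syntactic types of tuples of length `< κ`. -/
def SynStableIn (K : AEC L) (κ μ : Cardinal.{u}) : Prop :=
  ∀ (A : Type u), #A ≤ μ → ∀ (M₀ : Mdl L), K.Mem M₀ → ∀ h₀ : A → M₀.Carrier,
    #{q : Σ β : {o : Ordinal.{u} // o < κ.ord}, Set (QF K κ (β.1.ToType ⊕ A)) //
      ∃ p : TypePt K q.1.1.ToType A,
        (∃ f : M₀.Carrier ↪[L] p.M.Carrier, K.IsStrong f ∧ ∀ a, f (h₀ a) = p.par a) ∧
        q.2 = TypePt.stp κ p} ≤ Cardinal.lift.{u + 1} μ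

/-- `p_κ ↾ φ` `φ`-splits over the set `Π` of quantifier-free formulas over `A`, where the
syntactic type `p_κ` is given by the pointed tuple `p`: there are instances `φ(x;b) ∈ p_κ` and
`¬φ(x;c) ∈ p_κ` with `b, c` tuples from `A` satisfying the same formulas of `Π`. -/
def PhiSplits {K : AEC L} {ι A : Type u} (κ : Cardinal.{u}) (p : TypePt K ι A) (Y : Type u)
    (φ : QF K κ (ι ⊕ Y)) (Pi : Set (Σ Z : Type u, QF K κ (Z ⊕ A))) : Prop :=
  ∃ b c : Y → A,
    QF.Realize p.M p.mem φ (Sum.elim p.tup (p.par ∘ b)) ∧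
    ¬ QF.Realize p.M p.mem φ (Sum.elim p.tup (p.par ∘ c)) ∧
    ∀ ψ : QF K κ (Y ⊕ A), (⟨Y, ψ⟩ : Σ Z : Type u, QF K κ (Z ⊕ A)) ∈ Pi →
      (QF.Realize p.M p.mem ψ (Sum.elim (p.par ∘ b) p.par) ↔
        QF.Realize p.M p.mem ψ (Sum.elim (p.par ∘ c) p.par))

/-- the syntactic type given by `p` splits over `Π`. -/
def Splits {K : AEC L} {ι A : Type u} (κ : Cardinal.{u}) (p : TypePt K ι A)
    (Pi : Set (Σ Z : Type u, QF K κ (Z ⊕ A))) : Prop :=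
  ∃ (Y : Type u), #Y < κ ∧ ∃ φ : QF K κ (ι ⊕ Y), PhiSplits κ p Y φ Pi

/-- The bound `χ = |L̂|^{<κ}` on the number of quantifier-free `L̂_{κ,κ}`-formulas. -/
noncomputable def hatFormulaBound (K : AEC L) (κ : Cardinal.{u}) : Cardinal.{u + 1} :=
  (Cardinal.lift.{u + 1} L.card +
      #(Σ β : {o : Ordinal.{u} // o < κ.ord}, GType K β.1.ToType PEmpty.{u + 1}))
    ^< Cardinal.lift.{u + 1} κ

/-- The placed set `(A, h)` is `(<χ)`-compact in `M`. -/
def IsCompactSet (K : AEC L) (κ χ : Cardinal.{u}) (A : Type u) (M : Mdl L) (hM : K.Mem M)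
    (h : A → M.Carrier) : Prop :=
  ∀ (J : Type u), #J < χ → ∀ φ : J → QF K κ (PUnit.{u + 1} ⊕ A),
    (∃ b : M.Carrier, ∀ j, QF.Realize M hM (φ j) (Sum.elim (fun _ => b) h)) →
    ∃ a : A, ∀ j, QF.Realize M hM (φ j) (Sum.elim (fun _ => h a) h)

/-! ### Monster model -/

/-- A monster model for `K`: `K` has AP, JEP and no maximal model, the model `M` is universal,
and any two tuples with the same Galois type over the empty set are conjugate by an
automorphism (so Galois types over subsets of the monster are automorphism orbits). -/
structure Monster (K : AEC L) : Type (u + 1) where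
  M : Mdl L
  mem : K.Mem M
  ap : AP K
  jep : JEP K
  nmm : NMM K
  universal : ∀ N : Mdl L, K.Mem N → ∃ f : N.Carrier ↪[L] M.Carrier, K.IsStrong f
  homogeneous : ∀ (A : Type u) (h₁ h₂ : A → M.Carrier),
    gtp (K := K) ⟨M, mem, PEmpty.elim, h₁⟩ = gtp (K := K) ⟨M, mem, PEmpty.elim, h₂⟩ →
    ∃ e : M.Carrier ≃[L] M.Carrier, ∀ a, e (h₁ a) = h₂ a

/-- Inside a monster model, `gtp(a/B) = gtp(b/B)` iff `a` and `b` are in the same orbit under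
automorphisms fixing `B` pointwise. -/
def OrbEq {K : AEC L} (U : Monster K) (B : Set U.M.Carrier) (a b : U.M.Carrier) : Prop :=
  ∃ e : U.M.Carrier ≃[L] U.M.Carrier, (∀ x ∈ B, e x = x) ∧ e a = b

/-- `K` (with monster `U`) is stable in `μ`: over every subset of the monster of size `≤ μ`
there are at most `μ` Galois types (= orbits) of single elements. -/
def MStableIn {K : AEC L} (U : Monster K) (μ : Cardinal.{u}) : Prop :=
  ∀ B : Set U.M.Carrier, #B ≤ μ → #(Quot (OrbEq U B)) ≤ μ

/-- `gtp(d/B)` `μ`-splits over `A ⊆ B`: there are `A ⊆ B₁, B₂ ⊆ B` with `|B₁| = μ` and an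
isomorphism `f : B₁ ≅_A B₂` (an automorphism of the monster fixing `A`, with `B₂ = f '' B₁`)
such that `f(p) ↾ B₂ ≠ p ↾ B₂`. -/
def MuSplits {K : AEC L} (U : Monster K) (B A : Set U.M.Carrier) (μ : Cardinal.{u})
    (d : U.M.Carrier) : Prop :=
  ∃ (B₁ : Set U.M.Carrier) (e : U.M.Carrier ≃[L] U.M.Carrier),
    A ⊆ B₁ ∧ B₁ ⊆ B ∧ (e '' B₁) ⊆ B ∧ #B₁ = μ ∧ (∀ x ∈ A, e x = x) ∧
    ¬ OrbEq U (e '' B₁) (e d) d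

/-- The `(<κ)`-syntactic type of the tuple `b` over the subset `A` of the monster. -/
def mstp {K : AEC L} (U : Monster K) (κ : Cardinal.{u}) {Y : Type u} (A : Set U.M.Carrier)
    (b : Y → U.M.Carrier) : Set (QF K κ (Y ⊕ ↥A)) :=
  {φ | QF.Realize U.M U.mem φ (Sum.elim b Subtype.val)}

/-- `tp_κ(d/B)` `(<κ)`-syntactically splits over the set of all quantifier-free
`L̂_{κ,κ}`-formulas with parameters in `A`: there are `φ(x;b), ¬φ(x;c) ∈ tp_κ(d/B)` with
`b, c` tuples from `B` having the same syntactic type over `A`. -/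
def MSynSplits {K : AEC L} (U : Monster K) (κ : Cardinal.{u}) (B A : Set U.M.Carrier)
    (d : U.M.Carrier) : Prop :=
  ∃ (Y : Type u) (_ : #Y < κ) (φ : QF K κ (PUnit.{u + 1} ⊕ Y)) (b c : Y → U.M.Carrier),
    (∀ y, b y ∈ B) ∧ (∀ y, c y ∈ B) ∧
    QF.Realize U.M U.mem φ (Sum.elim (fun _ => d) b) ∧
    ¬ QF.Realize U.M U.mem φ (Sum.elim (fun _ => d) c) ∧
    mstp U κ A b = mstp U κ A c

/-- `|gS^{<β}(A)|` for a placed set: the number of Galois types of tuples of length `< β`. -/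
noncomputable def gSLtCard (K : AEC L) (β : Ordinal.{u}) (A : Type u) (M₀ : Mdl L)
    (h₀ : A → M₀.Carrier) : Cardinal.{u + 1} :=
  #{q : Σ γ : {o : Ordinal.{u} // o < β}, GType K γ.1.ToType A //
      q.2 ∈ typesOver K q.1.1.ToType A M₀ h₀}

/-- `K` is `(<β)`-stable in `λ`. -/
def StableLtIn (K : AEC L) (β : Ordinal.{u}) (lam : Cardinal.{u}) : Prop :=
  ∀ (A : Type u), #A ≤ lam → ∀ (M₀ : Mdl L), K.Mem M₀ → ∀ h₀ : A → M₀.Carrier,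
    gSLtCard K β A M₀ h₀ ≤ Cardinal.lift.{u + 1} lam

/-- `κ⁻`: the predecessor cardinal of `κ` if it exists, and `κ` itself otherwise. -/
noncomputable def predCard (κ : Cardinal.{u}) : Cardinal.{u} :=
  sInf {c : Cardinal.{u} | κ ≤ Order.succ c}

/-! When `K` has a model of size `λ`, both sides equal `2 ^ κ`. From below, the `κ`-tuples of
such a model `M` realize `λ ^ κ = 2 ^ κ` distinct Galois types over `M`. From above, by
Löwenheim–Skolem every Galois type of a `κ`-tuple over a set of size `≤ κ` is realized in a
model of size `≤ κ`, and there are at most `2 ^ κ` such pointed models up to isomorphism. -/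

section CardinalBounds

lemma power_le_two_power {a c κ : Cardinal} (hκ : ℵ₀ ≤ κ) (ha : a ≤ 2 ^ κ) (hc : c ≤ κ) :
    a ^ c ≤ 2 ^ κ :=
  calc a ^ c ≤ (2 ^ κ) ^ c := power_le_power_right ha
    _ = 2 ^ (κ * c) := power_mul.symm
    _ ≤ 2 ^ (κ * κ) := power_le_power_left two_ne_zero (by gcongr)
    _ = 2 ^ κ := by rw [mul_eq_self hκ]

lemma power_eq_two_power_of_le {a κ : Cardinal} (hκ : ℵ₀ ≤ κ) (h2 : 2 ≤ a)
    (ha : a ≤ 2 ^ κ) : a ^ κ = 2 ^ κ :=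
  le_antisymm (power_le_two_power hκ ha le_rfl) (power_le_power_right h2)

lemma mk_fin_arrow_le {X : Type u} {κ : Cardinal.{u}} (hκ : ℵ₀ ≤ κ) (hX : #X ≤ κ) (n : ℕ) :
    #(Fin n → X) ≤ κ := by
  rw [mk_arrow, lift_uzero, mk_fin, lift_natCast, power_natCast]
  exact (pow_le_pow_left₀ zero_le hX n).trans (power_nat_le hκ)

lemma mk_pi_nat_le_two_power {F G : ℕ → Type u} {κ : Cardinal.{u}} (hκ : ℵ₀ ≤ κ)
    (hF : ∀ n, #(F n) ≤ κ) (hG : ∀ n, #(G n) ≤ 2 ^ κ) : #(∀ n, F n → G n) ≤ 2 ^ κ := by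
  rw [mk_pi]
  refine (prod_le_prod _ (fun _ => 2 ^ κ) fun n => ?_).trans ?_
  · rw [← power_def]
    exact power_le_two_power hκ (hG n) (hF n)
  · rw [prod_const, lift_uzero, mk_nat, lift_aleph0]
    exact power_le_two_power hκ le_rfl hκ

lemma mk_structure_le (L : FirstOrder.Language.{u, u}) {X : Type u} {κ : Cardinal.{u}}
    (hκ : ℵ₀ ≤ κ) (hL : L.card ≤ κ) (hX : #X ≤ κ) : #(L.Structure X) ≤ 2 ^ κ := by
  have hfun (n : ℕ) : #(L.Functions n) ≤ κ :=
    (mk_le_of_injective (f := fun f => (Sum.inl ⟨n, f⟩ : L.Symbols))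
      fun _ _ h => by simpa using h).trans hL
  have hrel (n : ℕ) : #(L.Relations n) ≤ κ :=
    (mk_le_of_injective (f := fun r => (Sum.inr ⟨n, r⟩ : L.Symbols))
      fun _ _ h => by simpa using h).trans hL
  let interp (S : L.Structure X) :
      (∀ n, L.Functions n → (Fin n → X) → X) × (∀ n, L.Relations n → Set (Fin n → X)) :=
    (fun _ f => S.funMap f, fun _ r => {xs | S.RelMap r xs})
  have hinterp : Function.Injective interp := by
    rintro ⟨f, r⟩ ⟨f', r'⟩ h
    obtain ⟨hf, hr⟩ := Prod.mk.inj h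
    congr
  have hfunMap (n : ℕ) : #((Fin n → X) → X) ≤ 2 ^ κ := by
    rw [← power_def]
    exact power_le_two_power hκ (hX.trans (cantor κ).le) (mk_fin_arrow_le hκ hX n)
  have hrelMap (n : ℕ) : #(Set (Fin n → X)) ≤ 2 ^ κ := by
    rw [mk_set]
    exact power_le_power_left two_ne_zero (mk_fin_arrow_le hκ hX n)
  calc #(L.Structure X) ≤ _ := mk_le_of_injective hinterp
    _ ≤ 2 ^ κ * 2 ^ κ := by
      rw [mk_prod, lift_id, lift_id]
      exact mul_le_mul' (mk_pi_nat_le_two_power hκ hfun hfunMap)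
        (mk_pi_nat_le_two_power hκ hrel hrelMap)
    _ = 2 ^ κ := mul_eq_self (hκ.trans (cantor κ).le)

end CardinalBounds

section GaloisTypes

variable {K : AEC L}

lemma TypePt.par_eq_tup_iff_of_gtp_eq {ι A : Type u} {p q : TypePt K ι A} (h : gtp p = gtp q)
    (a : A) (i : ι) : p.par a = p.tup i ↔ q.par a = q.tup i := by
  have hr := Quotient.exact h
  clear h
  induction hr with
  | rel x y hxy =>
      obtain ⟨N, f, g, -, -, hpar, htup⟩ := hxy
      rw [← f.injective.eq_iff, hpar, htup, g.injective.eq_iff]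
  | refl => rfl
  | symm _ _ _ ih => exact ih.symm
  | trans _ _ _ _ _ ih₁ ih₂ => exact ih₁.trans ih₂

lemma gtp_tuple_injective {ι : Type u} (M : Mdl L) (hM : K.Mem M) :
    Function.Injective fun t : ι → M.Carrier => gtp (K := K) ⟨M, hM, id, t⟩ :=
  fun t _ h => funext fun i => (TypePt.par_eq_tup_iff_of_gtp_eq h (t i) i).mp rfl

lemma gtp_tuple_mem_typesOver {ι : Type u} (M : Mdl L) (hM : K.Mem M) (t : ι → M.Carrier) :
    gtp (K := K) ⟨M, hM, id, t⟩ ∈ typesOver K ι M.Carrier M id :=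
  ⟨_, ⟨FirstOrder.Language.Embedding.refl L M.Carrier, K.strong_refl hM, fun _ => rfl⟩, rfl⟩

lemma lift_power_le_gSModelCard {ι : Type u} (M : Mdl L) (hM : K.Mem M) :
    lift.{u + 1} (#M.Carrier ^ #ι) ≤ gSModelCard K ι M := by
  rw [power_def, ← mk_uLift]
  exact mk_le_of_injective (f := fun t : ULift.{u + 1} (ι → M.Carrier) =>
      (⟨_, gtp_tuple_mem_typesOver M hM t.down⟩ : typesOver K ι M.Carrier M id))
    fun t t' h => ULift.ext _ _ (gtp_tuple_injective M hM (congrArg Subtype.val h))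

def CodePt (L : FirstOrder.Language.{u, u}) (T ι A : Type u) : Type u :=
  Σ s : Set T, L.Structure s × (A → s) × (ι → s)

def CodePt.toMdl {T ι A : Type u} (c : CodePt L T ι A) : Mdl L := ⟨c.1, c.2.1⟩

def TypePt.Matches {ι A T : Type u} (p : TypePt K ι A) (c : CodePt L T ι A) : Prop :=
  ∃ e : p.M.Carrier ≃[L] c.toMdl.Carrier,
    (∀ a, e (p.par a) = c.2.2.1 a) ∧ ∀ i, e (p.tup i) = c.2.2.2 i

lemma gtp_eq_of_matches {ι A T : Type u} {p q : TypePt K ι A} {c : CodePt L T ι A}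
    (hp : p.Matches c) (hq : q.Matches c) : gtp p = gtp q := by
  obtain ⟨e₁, hpar₁, htup₁⟩ := hp
  obtain ⟨e₂, hpar₂, htup₂⟩ := hq
  refine Quotient.sound (Relation.EqvGen.rel _ _ ⟨q.M, (e₂.symm.comp e₁).toEmbedding,
    FirstOrder.Language.Embedding.refl L _, K.iso_strong _ p.mem q.mem, K.strong_refl q.mem,
    fun a => ?_, fun i => ?_⟩)
  · show e₂.symm (e₁ (p.par a)) = q.par a
    rw [hpar₁, ← hpar₂, e₂.symm_apply_apply]
  · show e₂.symm (e₁ (p.tup i)) = q.tup i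
    rw [htup₁, ← htup₂, e₂.symm_apply_apply]

lemma TypePt.exists_matches_of_mk_le {ι A T : Type u} (p : TypePt K ι A)
    (h : #p.M.Carrier ≤ #T) : ∃ c : CodePt L T ι A, p.Matches c := by
  obtain ⟨j⟩ := h
  let e : p.M.Carrier ≃ Set.range j := Equiv.ofInjective j j.injective
  let _ : L.Structure (Set.range j) := e.inducedStructure
  exact ⟨⟨Set.range j, inferInstance, e ∘ p.par, e ∘ p.tup⟩,
    e.inducedStructureEquiv, fun _ => rfl, fun _ => rfl⟩

lemma mk_codePt_le {T ι A : Type u} {κ : Cardinal.{u}} (hκ : ℵ₀ ≤ κ) (hL : L.card ≤ κ)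
    (hT : #T ≤ κ) (hA : #A ≤ κ) (hι : #ι ≤ κ) : #(CodePt L T ι A) ≤ 2 ^ κ := by
  have h2κ : ℵ₀ ≤ (2 : Cardinal.{u}) ^ κ := hκ.trans (cantor κ).le
  rw [CodePt, mk_sigma]
  calc (sum fun s : Set T => #(L.Structure s × (A → s) × (ι → s)))
      ≤ sum fun _ : Set T => (2 : Cardinal.{u}) ^ κ := sum_le_sum _ _ fun s => by
        have hs : #s ≤ κ := (mk_set_le s).trans hT
        rw [mk_prod, mk_prod, lift_id, lift_id, lift_id, lift_id, ← power_def, ← power_def]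
        calc #(L.Structure s) * (#s ^ #A * #s ^ #ι) ≤ 2 ^ κ * (2 ^ κ * 2 ^ κ) :=
              mul_le_mul' (mk_structure_le L hκ hL hs)
                (mul_le_mul' (power_le_two_power hκ (hs.trans (cantor κ).le) hA)
                  (power_le_two_power hκ (hs.trans (cantor κ).le) hι))
          _ = 2 ^ κ := by rw [mul_eq_self h2κ, mul_eq_self h2κ]
    _ = 2 ^ #T * 2 ^ κ := by rw [sum_const', mk_set]
    _ ≤ 2 ^ κ * 2 ^ κ := mul_le_mul' (power_le_power_left two_ne_zero hT) le_rfl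
    _ = 2 ^ κ := mul_eq_self h2κ

lemma exists_gtp_eq_of_mk_le {ι A : Type u} {κ : Cardinal.{u}} (hκ : ℵ₀ ≤ κ)
    (hLS : K.LS ≤ κ) (hA : #A ≤ κ) (hι : #ι ≤ κ) (p : TypePt K ι A) :
    ∃ q : TypePt K ι A, gtp q = gtp p ∧ #q.M.Carrier ≤ κ := by
  obtain ⟨N, f, hf, hsub, hcard⟩ :=
    K.lowenheimSkolem p.M p.mem (Set.range p.par ∪ Set.range p.tup)
  have hpar (a : A) : p.par a ∈ Set.range f := hsub (Or.inl ⟨a, rfl⟩)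
  have htup (i : ι) : p.tup i ∈ Set.range f := hsub (Or.inr ⟨i, rfl⟩)
  refine ⟨⟨N, K.strong_mem_left f hf, fun a => (hpar a).choose, fun i => (htup i).choose⟩,
    Quotient.sound (Relation.EqvGen.rel _ _ ⟨p.M, f, FirstOrder.Language.Embedding.refl L _,
      hf, K.strong_refl p.mem, fun a => (hpar a).choose_spec, fun i => (htup i).choose_spec⟩),
    hcard.trans (max_le ?_ hLS)⟩
  calc #(Set.range p.par ∪ Set.range p.tup : Set p.M.Carrier)
      ≤ #(Set.range p.par) + #(Set.range p.tup) := mk_union_le _ _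
    _ ≤ κ + κ := add_le_add (mk_range_le.trans hA) (mk_range_le.trans hι)
    _ = κ := add_eq_self hκ

/-- Each Galois type is coded by an isomorphic copy of a small realization on a subset of
`κ.out`. -/
lemma mk_gType_le {ι A : Type u} {κ : Cardinal.{u}} (hLS : K.LS ≤ κ) (hA : #A ≤ κ)
    (hι : #ι ≤ κ) : #(GType K ι A) ≤ lift.{u + 1} ((2 : Cardinal.{u}) ^ κ) := by
  have hκ : ℵ₀ ≤ κ := le_add_self.trans (K.LS_ge.trans hLS)
  have hL : L.card ≤ κ := le_self_add.trans (K.LS_ge.trans hLS)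
  have hcode (t : GType K ι A) :
      ∃ c : CodePt L κ.out ι A, ∃ p : TypePt K ι A, gtp p = t ∧ p.Matches c := by
    obtain ⟨p, rfl⟩ := Quotient.exists_rep t
    obtain ⟨q, hq, hqκ⟩ := exists_gtp_eq_of_mk_le hκ hLS hA hι p
    obtain ⟨c, hc⟩ := q.exists_matches_of_mk_le (hqκ.trans_eq (mk_out κ).symm)
    exact ⟨c, q, hq, hc⟩
  choose code rep hrep hmatch using hcode
  have hinj : Function.Injective fun t => ULift.up.{u + 1} (code t) := fun t t' h => by
    rw [← hrep t, ← hrep t']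
    exact gtp_eq_of_matches (hmatch t) (ULift.up_injective h ▸ hmatch t')
  calc #(GType K ι A) ≤ #(ULift.{u + 1} (CodePt L κ.out ι A)) := mk_le_of_injective hinj
    _ = lift.{u + 1} #(CodePt L κ.out ι A) := mk_uLift _
    _ ≤ lift.{u + 1} (2 ^ κ) := lift_le.mpr (mk_codePt_le hκ hL (mk_out κ).le hA hι)

lemma gSSup_le_two_power {ι : Type u} {lam κ : Cardinal.{u}} (hLS : K.LS ≤ κ) (hlam : lam ≤ κ)
    (hι : #ι ≤ κ) : gSSup K ι lam ≤ 2 ^ lift.{u + 1} κ := by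
  rw [← lift_two_power]
  exact ciSup_le' fun M => (mk_set_le _).trans (mk_gType_le hLS (M.2.2.trans_le hlam) hι)

lemma lift_power_le_gSSup {ι : Type u} {lam : Cardinal.{u}} (M : Mdl L) (hM : K.Mem M)
    (hMlam : #M.Carrier = lam) : lift.{u + 1} (lam ^ #ι) ≤ gSSup K ι lam := by
  subst hMlam
  exact (lift_power_le_gSModelCard M hM).trans (le_ciSup bddAbove_of_small
    (⟨M, hM, rfl⟩ : {N : Mdl L // K.Mem N ∧ #N.Carrier = #M.Carrier}))

end GaloisTypes

theorem stmt0_general (L : FirstOrder.Language.{u, u}) (K : AEC L) (lam κ : Cardinal.{u})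
    (hls : K.LS ≤ lam) (hκ : lam ≤ κ) :
    gSSup K PUnit.{u + 1} lam ^ Cardinal.lift.{u + 1} κ = gSSup K κ.out lam := by
  have hlam : ℵ₀ ≤ lam := le_add_self.trans (K.LS_ge.trans hls)
  have hLS : K.LS ≤ κ := hls.trans hκ
  have hκω : ℵ₀ ≤ lift.{u + 1} κ := aleph0_le_lift.mpr (hlam.trans hκ)
  have hunit : #(PUnit.{u + 1} : Type u) ≤ κ :=
    mk_punit.trans_le (one_le_aleph0.trans (hlam.trans hκ))
  rcases isEmpty_or_nonempty {M : Mdl L // K.Mem M ∧ #M.Carrier = lam} with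
    hS | ⟨⟨M, hM, hMlam⟩⟩
  · rw [gSSup, gSSup, ciSup_of_empty, ciSup_of_empty, bot_eq_zero,
      zero_power (aleph0_pos.trans_le hκω).ne']
  have htop : gSSup K κ.out lam = 2 ^ lift.{u + 1} κ := by
    refine le_antisymm (gSSup_le_two_power hLS hκ (mk_out κ).le) ?_
    have h := lift_power_le_gSSup (ι := κ.out) M hM hMlam
    rwa [mk_out, power_eq_two_power (hlam.trans hκ) (ofNat_le_aleph0.trans hlam) hκ,
      lift_power, lift_two] at h
  have h2 : 2 ≤ gSSup K PUnit.{u + 1} lam := by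
    have h := lift_power_le_gSSup (ι := PUnit.{u + 1}) M hM hMlam
    rw [mk_punit, power_one] at h
    exact (lift_two.{u + 1, u}.symm.trans_le (lift_le.mpr (ofNat_le_aleph0.trans hlam))).trans h
  rw [htop, power_eq_two_power_of_le hκω h2 (gSSup_le_two_power hLS hκ hunit)]

/-- if `K` has `λ`-AP and `κ ≥ λ`, then `(gS¹_λ)^κ = gS^κ_λ`. -/
theorem stmt0 (L : FirstOrder.Language.{u, u}) (K : AEC L) (lam κ : Cardinal.{u})
    (hls : K.LS ≤ lam) (hap : APAt K lam) (hκ : lam ≤ κ) :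
    gSSup K PUnit.{u + 1} lam ^ Cardinal.lift.{u + 1} κ = gSSup K κ.out lam :=
  stmt0_general L K lam κ hls hκ

end AECStmt
end

section
/- Let K be an AEC, κ an infinite cardinal, and K̂ the (<κ)-Galois Morleyization of K. For each Galois type p = gtp(b/A;M) ∈ gS(A) let p_κ := tp_κ(b/A;M̂) be its (<κ)-syntactic type. Then K is (<κ)-tame if and only if for every set A contained in a model of K, the map p ↦ p_κ is a well-defined bijection from gS(A) onto the set of (<κ)-syntactic types of single elements over A. -/
universe u

open Cardinal Set FirstOrder

namespace AECStmt

variable (L : FirstOrder.Language.{u, u})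

variable {L}

/-! Strong embeddings preserve the satisfaction of quantifier-free `L̂_{κ,κ}`-formulas, so
Galois-equal tuples have equal syntactic types. For `A₀ ⊆ A` with `|A₀| < κ`, the predicate `R_p`,
where `p` is the Galois type over `∅` of `b` followed by an enumeration of `A₀`, lies in
`tp_κ(b/A)`; so equal syntactic types give equal restrictions to every small `A₀`, and tameness
then gives equal Galois types. Conversely, an atomic formula mentions fewer than `κ` parameters
and its truth is decided by the Galois type over them; so by induction on formulas, types with
equal small restrictions have equal syntactic types, hence are equal by the bijection
hypothesis, which is tameness. -/

section SyntacticTypes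

variable {L : FirstOrder.Language.{u, u}} {K : AEC L} {κ : Cardinal.{u}} {ι A : Type u}

open FirstOrder.Language

def TypePt.reindex {ι' A' : Type u} (g : ι' → ι ⊕ A) (h : A' → ι ⊕ A) (p : TypePt K ι A) :
    TypePt K ι' A' :=
  ⟨p.M, p.mem, Sum.elim p.tup p.par ∘ h, Sum.elim p.tup p.par ∘ g⟩

theorem TypePt.EqAtom.reindex {ι' A' : Type u} {p q : TypePt K ι A} (hpq : p.EqAtom q)
    (g : ι' → ι ⊕ A) (h : A' → ι ⊕ A) : (p.reindex g h).EqAtom (q.reindex g h) := by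
  obtain ⟨N, f, f', hf, hf', hpar, htup⟩ := hpq
  have hw : ∀ x, f (Sum.elim p.tup p.par x) = f' (Sum.elim q.tup q.par x) := by
    rintro (i | a)
    exacts [htup i, hpar a]
  exact ⟨N, f, f', hf, hf', fun _ => hw _, fun _ => hw _⟩

theorem gtp_reindex_eq {ι' A' : Type u} {p q : TypePt K ι A} (hpq : gtp p = gtp q)
    (g : ι' → ι ⊕ A) (h : A' → ι ⊕ A) : gtp (p.reindex g h) = gtp (q.reindex g h) := by
  have hgen : Relation.EqvGen TypePt.EqAtom p q := Quotient.exact hpq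
  clear hpq
  refine Quotient.sound ?_
  induction hgen with
  | rel x y hxy => exact .rel _ _ (hxy.reindex g h)
  | refl x => exact .refl _
  | symm x y _ ih => exact .symm _ _ ih
  | trans x y z _ _ ih₁ ih₂ => exact .trans _ _ _ ih₁ ih₂

theorem gtp_comp_of_isStrong {M N : Mdl L} (hM : K.Mem M) (hN : K.Mem N)
    (f : M.Carrier ↪[L] N.Carrier) (hf : K.IsStrong f) (par : A → M.Carrier)
    (tup : ι → M.Carrier) :
    gtp (⟨N, hN, f ∘ par, f ∘ tup⟩ : TypePt K ι A) = gtp ⟨M, hM, par, tup⟩ :=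
  Quotient.sound <| .symm _ _ <| .rel _ _
    ⟨N, f, Embedding.refl L N.Carrier, hf, K.strong_refl hN, fun _ => rfl, fun _ => rfl⟩

theorem QF.realize_comp_of_isStrong {γ : Type u} {M N : Mdl L} (hM : K.Mem M) (hN : K.Mem N)
    (f : M.Carrier ↪[L] N.Carrier) (hf : K.IsStrong f) (φ : QF K κ γ) (v : γ → M.Carrier) :
    QF.Realize N hN φ (f ∘ v) ↔ QF.Realize M hM φ v := by
  induction φ with
  | eq t₁ t₂ =>
    simp only [QF.Realize, HomClass.realize_term, f.injective.eq_iff]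
  | lrel R ts =>
    simp only [QF.Realize, HomClass.realize_term]
    exact f.map_rel R _
  | grel β hβ P vars =>
    simp only [QF.Realize]
    rw [← gtp_comp_of_isStrong hM hN f hf, Subsingleton.elim (f ∘ PEmpty.elim) PEmpty.elim]
    rfl
  | not φ ih => exact not_congr ih
  | conj J hJ φs ih => exact forall_congr' ih

theorem realize_iff_of_gtp_eq {p q : TypePt K ι A} (hpq : gtp p = gtp q) (φ : QF K κ ι) :
    QF.Realize p.M p.mem φ p.tup ↔ QF.Realize q.M q.mem φ q.tup := by
  have hgen : Relation.EqvGen TypePt.EqAtom p q := Quotient.exact hpq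
  clear hpq
  induction hgen with
  | rel x y hxy =>
    obtain ⟨N, f, g, hf, hg, -, htup⟩ := hxy
    have hN := K.strong_mem_right f hf
    rw [← QF.realize_comp_of_isStrong x.mem hN f hf, ← QF.realize_comp_of_isStrong y.mem hN g hg,
      show f ∘ x.tup = g ∘ y.tup from funext htup]
  | refl x => exact .rfl
  | symm x y _ ih => exact ih.symm
  | trans x y z _ _ ih₁ ih₂ => exact ih₁.trans ih₂

theorem TypePt.stp_eq_of_gtp_eq {p q : TypePt K ι A} (hpq : gtp p = gtp q) :
    p.stp κ = q.stp κ :=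
  Set.ext fun φ => realize_iff_of_gtp_eq (A := A) (gtp_reindex_eq hpq id Sum.inr) φ

theorem TypePt.reindex_empty_eq (p : TypePt K ι A) {β : Type u} (v : β → ι ⊕ A) :
    p.reindex v PEmpty.elim = ⟨p.M, p.mem, PEmpty.elim, Sum.elim p.tup p.par ∘ v⟩ := by
  rw [reindex, Subsingleton.elim (Sum.elim p.tup p.par ∘ PEmpty.elim) PEmpty.elim]

theorem TypePt.gtp_restrict_eq_of_stp_eq (hκ : ℵ₀ ≤ κ) (hι : #ι < κ) {p q : TypePt K ι A}
    (hpq : p.stp κ = q.stp κ) {A₀ : Set A} (hA₀ : #A₀ < κ) :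
    gtp (p.restrict A₀) = gtp (q.restrict A₀) := by
  have hlt : #(ι ⊕ A₀) < κ := by simpa using add_lt_of_lt hκ hι hA₀
  obtain ⟨e⟩ : Nonempty ((#(ι ⊕ A₀)).ord.ToType ≃ ι ⊕ A₀) := Cardinal.eq.mp (mk_ord_toType _)
  set v := Sum.map id Subtype.val ∘ e
  have hback : ∀ r : TypePt K ι A,
      (r.reindex v PEmpty.elim).reindex (Sum.inl ∘ e.symm ∘ Sum.inl)
        (Sum.inl ∘ e.symm ∘ Sum.inr) = r.restrict A₀ := by
    intro r
    simp [v, Function.comp_def, TypePt.reindex, TypePt.restrict]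
  have hmem : QF.grel _ (ord_lt_ord.2 hlt) (gtp (p.reindex v PEmpty.elim)) v ∈ p.stp κ := by
    show gtp _ = _
    rw [p.reindex_empty_eq]
    rfl
  rw [hpq] at hmem
  replace hmem : gtp (q.reindex v PEmpty.elim) = gtp (p.reindex v PEmpty.elim) := by
    rw [q.reindex_empty_eq]
    exact hmem
  rw [← hback p, ← hback q]
  exact gtp_reindex_eq hmem.symm _ _

theorem exists_sumMap_comp_eq {γ : Type u} (v : γ → ι ⊕ A) :
    ∃ g : γ → ι ⊕ (Sum.inr ⁻¹' range v : Set A), Sum.map id Subtype.val ∘ g = v := by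
  have hpt : ∀ c, ∃ y : ι ⊕ (Sum.inr ⁻¹' range v : Set A), Sum.map id Subtype.val y = v c := by
    intro c
    rcases hc : v c with i | a
    exacts [⟨.inl i, rfl⟩, ⟨.inr ⟨a, c, hc⟩, rfl⟩]
  choose g hg using hpt
  exact ⟨g, funext hg⟩

theorem realize_comp_iff_of_gtp_restrict_eq {p q : TypePt K ι A}
    (hres : ∀ A₀ : Set A, #A₀ < κ → gtp (p.restrict A₀) = gtp (q.restrict A₀))
    {γ : Type u} (hγ : #γ < κ) (φ : QF K κ γ) (v : γ → ι ⊕ A) :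
    QF.Realize p.M p.mem φ (Sum.elim p.tup p.par ∘ v) ↔
      QF.Realize q.M q.mem φ (Sum.elim q.tup q.par ∘ v) := by
  set S : Set A := Sum.inr ⁻¹' range v
  have hS : #S < κ :=
    ((mk_preimage_of_injective _ _ Sum.inr_injective).trans mk_range_le).trans_lt hγ
  obtain ⟨g, hg⟩ := exists_sumMap_comp_eq v
  rw [← hg, ← Function.comp_assoc, ← Function.comp_assoc, Sum.elim_comp_map, Sum.elim_comp_map,
    Function.comp_id, Function.comp_id]
  exact realize_iff_of_gtp_eq (gtp_reindex_eq (hres S hS) g (PEmpty.elim : PEmpty.{u + 1} → _)) φ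

theorem TypePt.stp_eq_of_gtp_restrict_eq (hκ : ℵ₀ ≤ κ) {p q : TypePt K ι A}
    (hres : ∀ A₀ : Set A, #A₀ < κ → gtp (p.restrict A₀) = gtp (q.restrict A₀)) :
    p.stp κ = q.stp κ := by
  classical
  have hfin : ∀ {s : Set (ι ⊕ A)}, s.Finite → #s < κ := fun hs => hs.lt_aleph0.trans_le hκ
  ext φ
  induction φ with
  | eq t₁ t₂ =>
    simpa [TypePt.stp, QF.Realize] using realize_comp_iff_of_gtp_restrict_eq hres
      (hfin ((t₁.varFinset.finite_toSet).union t₂.varFinset.finite_toSet))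
      (.eq (t₁.restrictVar (Set.inclusion subset_union_left))
        (t₂.restrictVar (Set.inclusion subset_union_right))) Subtype.val
  | lrel R ts =>
    simpa [TypePt.stp, QF.Realize] using realize_comp_iff_of_gtp_restrict_eq hres
      (hfin (finite_iUnion fun i => (ts i).varFinset.finite_toSet))
      (.lrel R fun i => (ts i).restrictVar (Set.inclusion (subset_iUnion
        (fun i => ((ts i).varFinset : Set (ι ⊕ A))) i))) Subtype.val
  | grel β hβ P v =>
    exact realize_comp_iff_of_gtp_restrict_eq hres (by simpa using lt_ord.mp hβ)
      (.grel β hβ P id) v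
  | not φ ih => exact not_congr ih
  | conj J hJ φs ih => exact forall_congr' ih

end SyntacticTypes

theorem stmt12 (L : FirstOrder.Language.{u, u}) (K : AEC L) (κ : Cardinal.{u})
    (hκ : ℵ₀ ≤ κ) :
    Tame K κ ↔
      ∀ (A : Type u) (M₀ : Mdl L), K.Mem M₀ → ∀ h₀ : A → M₀.Carrier,
        ∀ p q : TypePt K PUnit.{u + 1} A,
          (∃ f : M₀.Carrier ↪[L] p.M.Carrier, K.IsStrong f ∧ ∀ a, f (h₀ a) = p.par a) →
          (∃ f : M₀.Carrier ↪[L] q.M.Carrier, K.IsStrong f ∧ ∀ a, f (h₀ a) = q.par a) →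
          (gtp p = gtp q ↔ TypePt.stp κ p = TypePt.stp κ q) := by
  constructor
  · intro htame A M₀ hM₀ h₀ p q hp hq
    refine ⟨TypePt.stp_eq_of_gtp_eq, fun hstp => ?_⟩
    by_contra hne
    obtain ⟨A₀, hA₀, hne'⟩ := htame A M₀ hM₀ h₀ _ _ ⟨p, hp, rfl⟩ ⟨q, hq, rfl⟩ hne
    have hunit : #PUnit.{u + 1} < κ := by simpa using one_lt_aleph0.trans_le hκ
    exact hne' (TypePt.gtp_restrict_eq_of_stp_eq hκ hunit hstp hA₀)
  · rintro hiff A M₀ hM₀ h₀ _ _ ⟨p, hp, rfl⟩ ⟨q, hq, rfl⟩ hne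
    by_contra! hres
    exact hne ((hiff A M₀ hM₀ h₀ p q hp hq).2 (TypePt.stp_eq_of_gtp_restrict_eq hκ hres))

end AECStmt
end
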